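/- Successive flat tetrahedrons of a local trajectory are connected via a common face containing a long edge (downward step): for every a ∈ ℤ⁴ and pairwise distinct i,j,k ∈ {1,2,3,4}, the intersection π(T(a;i,j,k)) ∩ π(T(a+eᵢ;j,k,i)) equals the projected triangle π(conv{a+eᵢ, a+eᵢ+eⱼ, a+eᵢ+eⱼ+e_k}); moreover this common face contains the edge from π(a+eᵢ) to π(a+eᵢ+eⱼ+e_k), which has length 1 (a long edge of both tetrahedrons). -/

import Mathlib

noncomputable section

/-- Ambient space ℝ⁴. -/
abbrev E4 := EuclideanSpace ℝ (Fin 4)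

/-- Standard basis vector eᵢ of ℝ⁴. -/
def ee4 (i : Fin 4) : E4 := EuclideanSpace.single i 1

/-- 𝟙 = e₁ + e₂ + e₃ + e₄. -/
def ones4 : E4 := ∑ i, ee4 i

/-- Orthogonal projection π onto the hyperplane H = {v ∈ ℝ⁴ : v₁+v₂+v₃+v₄ = 0},
    given by π(v) = v − ((v₁+v₂+v₃+v₄)/4)·𝟙. -/
def proj4 (v : E4) : E4 := v - ((∑ i, v i) / 4) • ones4

/-- A lattice point of ℤ⁴ viewed in ℝ⁴. -/
def toE4 (a : Fin 4 → ℤ) : E4 := WithLp.toLp 2 (fun n => (a n : ℝ))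

/-- Slant tetrahedron T(a;i,j,k) = conv{a, a+eᵢ, a+eᵢ+eⱼ, a+eᵢ+eⱼ+e_k}. -/
def slant4 (a : Fin 4 → ℤ) (i j k : Fin 4) : Set E4 :=
  convexHull ℝ {toE4 a, toE4 a + ee4 i, toE4 a + ee4 i + ee4 j,
    toE4 a + ee4 i + ee4 j + ee4 k}

/-- Flat tetrahedron: the image π(T(a;i,j,k)). -/
def flat4 (a : Fin 4 → ℤ) (i j k : Fin 4) : Set E4 := proj4 '' slant4 a i j k

/-!
Let `l` be the index different from `i, j, k`. The functional `φ v = vᵢ - v_l` vanishes on `𝟙`,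
so it is unchanged by `π`. On the vertices of the two flat tetrahedrons it takes the value
`c = aᵢ - a_l` at `π(a)`, `c + 1` on the three shared vertices and `c + 2` at `π(a + eᵢ+eⱼ+e_k+eᵢ)`.
Hence each tetrahedron is a cone over the shared triangle with apex on opposite sides of the
hyperplane `φ = c + 1`, and the two cones meet exactly in their common base. The long edge
`π(a+eᵢ+eⱼ+e_k) - π(a+eᵢ) = π(eⱼ + e_k)` has coordinates `±1/2`, so its length is `1`.
-/

theorem Fintype.exists_ne_ne_ne {α : Type*} [Fintype α] (h : 3 < Fintype.card α) (i j k : α) :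
    ∃ l, l ≠ i ∧ l ≠ j ∧ l ≠ k := by
  classical
  obtain ⟨l, -, hl⟩ := Finset.exists_mem_notMem_of_card_lt_card
    (s := {i, j, k}) (t := Finset.univ) (Finset.card_le_three.trans_lt h)
  simp only [Finset.mem_insert, Finset.mem_singleton, not_or] at hl
  exact ⟨l, hl⟩

open Set in
theorem convexHull_insert_inter_convexHull_insert_of_separates {𝕜 E : Type*} [Field 𝕜]
    [LinearOrder 𝕜] [IsStrictOrderedRing 𝕜] [AddCommGroup E] [Module 𝕜 E]
    (φ : E →ₗ[𝕜] 𝕜) {s : Set E} {p q : E} {t : 𝕜} (hs : s.Nonempty)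
    (hφs : ∀ x ∈ s, φ x = t) (hp : φ p < t) (hq : t < φ q) :
    convexHull 𝕜 (insert p s) ∩ convexHull 𝕜 (insert q s) = convexHull 𝕜 s := by
  refine Subset.antisymm ?_ <|
    subset_inter (convexHull_mono (subset_insert _ _)) (convexHull_mono (subset_insert _ _))
  have hφhull : ∀ z ∈ convexHull 𝕜 s, φ z = t := fun z hz =>
    convexHull_min hφs (convex_hyperplane φ.isLinear t) hz
  rintro x ⟨hxp, hxq⟩
  simp only [convexHull_insert hs, mem_convexJoin, mem_singleton_iff, exists_eq_left] at hxp hxq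
  obtain ⟨y, hy, α, β, hα, hβ, hαβ, rfl⟩ := hxp
  obtain ⟨z, hz, γ, δ, hγ, hδ, hγδ, hx⟩ := hxq
  have hφx := congrArg φ hx
  simp only [map_add, map_smul, smul_eq_mul, hφhull y hy, hφhull z hz] at hφx
  have hα0 : α = 0 := by
    have hsum : α * (t - φ p) + γ * (φ q - t) = 0 := by
      linear_combination hφx - t * hγδ + t * hαβ
    have : α * (t - φ p) = 0 := by
      nlinarith [mul_nonneg hα (sub_nonneg.2 hp.le), mul_nonneg hγ (sub_nonneg.2 hq.le)]
    exact (mul_eq_zero.1 this).resolve_right (sub_ne_zero.2 hp.ne')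
  obtain rfl : β = 1 := by linear_combination hαβ - hα0
  simpa [hα0] using hy

def proj4ₗ : E4 →ₗ[ℝ] E4 where
  toFun := proj4
  map_add' u v := by
    simp only [proj4, PiLp.add_apply, Finset.sum_add_distrib, add_div, add_smul]
    abel
  map_smul' c v := by
    simp only [proj4, PiLp.smul_apply, smul_eq_mul, ← Finset.mul_sum, mul_div_assoc, mul_smul,
      smul_sub, RingHom.id_apply]

@[simp]
lemma coe_proj4ₗ : ⇑proj4ₗ = proj4 := rfl

lemma ee4_apply (i n : Fin 4) : ee4 i n = if n = i then 1 else 0 := by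
  simp [ee4, PiLp.single_apply]

lemma ones4_apply (n : Fin 4) : ones4 n = 1 := by
  simp [ones4, ee4_apply]

lemma proj4_apply (v : E4) (n : Fin 4) : proj4 v n = v n - (∑ m, v m) / 4 := by
  simp [proj4, ones4_apply]

lemma proj4_apply_sub_proj4_apply (v : E4) (m n : Fin 4) :
    proj4 v m - proj4 v n = v m - v n := by
  simp only [proj4_apply]; ring

lemma toE4_add_single (a : Fin 4 → ℤ) (i : Fin 4) :
    toE4 (a + Pi.single i 1) = toE4 a + ee4 i := by
  ext n
  by_cases h : n = i <;> simp [toE4, ee4_apply, Pi.single_apply, h]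

lemma norm_proj4_ee4_add_ee4 {j k : Fin 4} (hjk : j ≠ k) : ‖proj4 (ee4 j + ee4 k)‖ = 1 := by
  have hsq : ∀ n, ‖proj4 (ee4 j + ee4 k) n‖ ^ 2 = 1 / 4 := by
    intro n
    simp only [proj4_apply, PiLp.add_apply, Finset.sum_add_distrib, ee4_apply,
      Finset.sum_ite_eq', Finset.mem_univ, if_true, Real.norm_eq_abs, sq_abs]
    split_ifs with hj hk
    · exact absurd (hj.symm.trans hk) hjk
    all_goals norm_num
  rw [EuclideanSpace.norm_eq, Finset.sum_congr rfl fun n _ => hsq n]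
  norm_num

lemma proj4_image_convexHull (s : Set E4) :
    proj4 '' convexHull ℝ s = convexHull ℝ (proj4 '' s) :=
  proj4ₗ.image_convexHull s

/-- downward step: π(T(a;i,j,k)) ∩ π(T(a+eᵢ;j,k,i)) equals the
projected triangle π(conv{a+eᵢ, a+eᵢ+eⱼ, a+eᵢ+eⱼ+e_k}); this common face
contains the long edge from π(a+eᵢ) to π(a+eᵢ+eⱼ+e_k), of length 1. -/
theorem stmt13 (a : Fin 4 → ℤ) (i j k : Fin 4)
    (hij : i ≠ j) (hik : i ≠ k) (hjk : j ≠ k) :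
    flat4 a i j k ∩ flat4 (a + Pi.single i 1) j k i =
      proj4 '' convexHull ℝ
        {toE4 a + ee4 i, toE4 a + ee4 i + ee4 j, toE4 a + ee4 i + ee4 j + ee4 k} ∧
    segment ℝ (proj4 (toE4 a + ee4 i)) (proj4 (toE4 a + ee4 i + ee4 j + ee4 k)) ⊆
      proj4 '' convexHull ℝ
        {toE4 a + ee4 i, toE4 a + ee4 i + ee4 j, toE4 a + ee4 i + ee4 j + ee4 k} ∧
    dist (proj4 (toE4 a + ee4 i)) (proj4 (toE4 a + ee4 i + ee4 j + ee4 k)) = 1 := by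
  obtain ⟨l, hli, hlj, hlk⟩ := Fintype.exists_ne_ne_ne (by simp) i j k
  set v := toE4 a
  let φ : E4 →ₗ[ℝ] ℝ := (EuclideanSpace.proj i - EuclideanSpace.proj l : E4 →L[ℝ] ℝ)
  have hφ : ∀ w, φ (proj4 w) = w i - w l := fun w => proj4_apply_sub_proj4_apply w i l
  have hface := convexHull_insert_inter_convexHull_insert_of_separates φ
    (s := proj4 '' {v + ee4 i, v + ee4 i + ee4 j, v + ee4 i + ee4 j + ee4 k})
    (p := proj4 v) (q := proj4 (v + ee4 i + ee4 j + ee4 k + ee4 i)) (t := v i - v l + 1)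
    (Set.image_nonempty.2 (Set.insert_nonempty _ _))
    (by rw [Set.forall_mem_image]; simp [hφ, ee4_apply, hij, hik, hli, hlj, hlk]; ring)
    (by simp [hφ])
    (by simp [hφ, ee4_apply, hij, hik, hli, hlj, hlk]; linarith)
  refine ⟨?_, ?_, ?_⟩
  · rw [flat4, flat4, slant4, slant4, toE4_add_single, proj4_image_convexHull,
      proj4_image_convexHull, proj4_image_convexHull, Set.pair_comm _ (v + _ + _ + _ + _),
      Set.insert_comm _ (v + _ + _ + _ + _), Set.insert_comm _ (v + _ + _ + _ + _)]
    simpa only [Set.image_insert_eq, Set.image_singleton] using hface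
  · rw [proj4_image_convexHull]
    exact segment_subset_convexHull (by simp) (by simp)
  · rw [dist_comm, dist_eq_norm, ← coe_proj4ₗ, ← map_sub,
      show v + ee4 i + ee4 j + ee4 k - (v + ee4 i) = ee4 j + ee4 k by abel]
    exact norm_proj4_ee4_add_ee4 hjk
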